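/- For 0 < α, define A_{n,k} = Σ_{j=k+1}^{n} f_{2α}(k,j)^2 · (4α²/(j(j+4α))) · f_{4α}(j,n), where f_x(k,n) = ∏_{m=k+1}^{n} m/(m+x). Then A_{n,k} ≤ C · (b_{n,4α}/b_{k,2α}²) · k^{-1} for some constant C depending only on α, where b_{m,x} = ∏_{j=1}^m j/(j+x). -/
import Mathlib


open scoped BigOperators

/-- `b m x = ∏_{j=1}^m j/(j+x)`. -/
noncomputable def b (m : ℕ) (x : ℝ) : ℝ := ∏ j ∈ Finset.Icc 1 m, (j : ℝ) / (j + x)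

/-- `f_x(k,n) = ∏_{m=k+1}^n m/(m+x) = b_{n,x}/b_{k,x}`. -/
noncomputable def f (x : ℝ) (k n : ℕ) : ℝ := ∏ m ∈ Finset.Icc (k + 1) n, (m : ℝ) / (m + x)

/-- `A_{n,k} = Σ_{j=k+1}^n f_{2α}(k,j)²·(4α²/(j(j+4α)))·f_{4α}(j,n)`. -/
noncomputable def A (α : ℝ) (n k : ℕ) : ℝ :=
  ∑ j ∈ Finset.Icc (k + 1) n,
    (f (2 * α) k j) ^ 2 * (4 * α ^ 2 / ((j : ℝ) * ((j : ℝ) + 4 * α))) * f (4 * α) j n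

lemma b_pos (m : ℕ) {x : ℝ} (hx : 0 < x) : 0 < b m x := by
  refine Finset.prod_pos fun j hj => ?_
  have h1 : (1:ℝ) ≤ j := by exact_mod_cast (Finset.mem_Icc.mp hj).1
  have hj0 : (0:ℝ) < j := lt_of_lt_of_le zero_lt_one h1
  positivity

lemma f_pos {x : ℝ} (hx : 0 < x) (k n : ℕ) : 0 < f x k n := by
  refine Finset.prod_pos fun m hm => ?_
  have h1 : (1:ℕ) ≤ m := le_trans (Nat.succ_le_succ (Nat.zero_le k)) (Finset.mem_Icc.mp hm).1
  have hm0 : (0:ℝ) < m := by exact_mod_cast h1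
  positivity

lemma b_mul_f (x : ℝ) {k n : ℕ} (h : k ≤ n) : b k x * f x k n = b n x := by
  unfold b f
  rw [show Finset.Icc (k+1) n = Finset.Ioc k n from Finset.Icc_add_one_left_eq_Ioc k n,
    show Finset.Icc 1 k = Finset.Ioc 0 k from Finset.Icc_add_one_left_eq_Ioc 0 k,
    show Finset.Icc 1 n = Finset.Ioc 0 n from Finset.Icc_add_one_left_eq_Ioc 0 n]
  exact Finset.prod_Ioc_consecutive _ (Nat.zero_le k) h

lemma b_sq_le (j : ℕ) {α : ℝ} (hα : 0 < α) : (b j (2 * α)) ^ 2 ≤ b j (4 * α) := by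
  unfold b
  rw [← Finset.prod_pow]
  refine Finset.prod_le_prod (fun m hm => by positivity) (fun m hm => ?_)
  have h1 : (1:ℝ) ≤ m := by exact_mod_cast (Finset.mem_Icc.mp hm).1
  have hm0 : (0:ℝ) < m := lt_of_lt_of_le zero_lt_one h1
  rw [div_pow, div_le_div_iff₀ (by positivity) (by positivity)]
  nlinarith [mul_pos hm0 (mul_pos hα hα)]

lemma tele (k : ℕ) (hk : 1 ≤ k) :
    ∀ n, k ≤ n → ∑ j ∈ Finset.Icc (k+1) n, (1/((j:ℝ)-1) - 1/j) = 1/k - 1/n := by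
  refine Nat.le_induction ?_ ?_
  · rw [Finset.Icc_eq_empty (by omega)]
    simp
  · intro n hn ih
    rw [Finset.sum_Icc_succ_top (by omega), ih]
    have hn0 : (0:ℝ) < n := by exact_mod_cast lt_of_lt_of_le hk hn
    push_cast
    ring

/-- For `α > 0`, `A_{n,k} ≤ C·(b_{n,4α}/b_{k,2α}²)·k⁻¹` for a constant `C`
depending only on `α`. -/
theorem stmt_15 (α : ℝ) (hα : 0 < α) :
    ∃ C : ℝ, 0 < C ∧ ∀ n k : ℕ, 1 ≤ k → k < n →
      A α n k ≤ C * (b n (4 * α) / (b k (2 * α)) ^ 2) * ((k : ℝ))⁻¹ := by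
  have h2α : (0:ℝ) < 2 * α := by linarith
  have h4α : (0:ℝ) < 4 * α := by linarith
  refine ⟨4 * α ^ 2, by positivity, fun n k hk hkn => ?_⟩
  set B : ℝ := b n (4 * α) / (b k (2 * α)) ^ 2 with hB
  have hBpos : 0 < B := by
    have := b_pos n h4α; have := b_pos k h2α; positivity
  have hk0 : (0:ℝ) < k := by exact_mod_cast hk
  have key : ∀ j ∈ Finset.Icc (k+1) n,
      (f (2 * α) k j) ^ 2 * (4 * α ^ 2 / ((j : ℝ) * ((j : ℝ) + 4 * α))) * f (4 * α) j n
        ≤ B * (4 * α ^ 2) * (1/((j:ℝ)-1) - 1/j) := by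
    intro j hj
    obtain ⟨hkj, hjn⟩ := Finset.mem_Icc.mp hj
    have hj2 : 2 ≤ j := by omega
    have hjR : (2:ℝ) ≤ j := by exact_mod_cast hj2
    have hj0 : (0:ℝ) < j := by linarith
    have hj1 : (0:ℝ) < (j:ℝ) - 1 := by linarith
    have hbk := b_pos k h2α
    have hbj2 := b_pos j h2α
    have hbj4 := b_pos j h4α
    have hbn := b_pos n h4α
    have hf2 : f (2 * α) k j = b j (2 * α) / b k (2 * α) := by
      rw [eq_div_iff hbk.ne', mul_comm]
      exact b_mul_f _ (by omega)
    have hf4 : f (4 * α) j n = b n (4 * α) / b j (4 * α) := by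
      rw [eq_div_iff hbj4.ne', mul_comm]
      exact b_mul_f _ hjn
    rw [hf2, hf4]
    have heq : (b j (2 * α) / b k (2 * α)) ^ 2 * (4 * α ^ 2 / ((j : ℝ) * ((j : ℝ) + 4 * α)))
        * (b n (4 * α) / b j (4 * α))
        = B * ((b j (2 * α)) ^ 2 / b j (4 * α)) * (4 * α ^ 2 / ((j : ℝ) * ((j : ℝ) + 4 * α))) := by
      rw [hB]; field_simp
    rw [heq]
    have h1 : (b j (2 * α)) ^ 2 / b j (4 * α) ≤ 1 :=
      (div_le_one hbj4).mpr (b_sq_le j hα)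
    have h2 : 4 * α ^ 2 / ((j : ℝ) * ((j : ℝ) + 4 * α)) ≤ 4 * α ^ 2 * (1/((j:ℝ)-1) - 1/j) := by
      have hsub : 1/((j:ℝ)-1) - 1/j = 1 / (((j:ℝ)-1) * j) := by
        rw [div_sub_div _ _ hj1.ne' hj0.ne', one_div]
        ring
      rw [hsub, div_eq_mul_one_div (4 * α ^ 2)]
      refine mul_le_mul_of_nonneg_left ?_ (by positivity)
      apply one_div_le_one_div_of_le (by positivity)
      nlinarith
    calc B * ((b j (2 * α)) ^ 2 / b j (4 * α)) * (4 * α ^ 2 / ((j : ℝ) * ((j : ℝ) + 4 * α)))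
        ≤ B * 1 * (4 * α ^ 2 * (1/((j:ℝ)-1) - 1/j)) := by
          apply mul_le_mul
          · exact mul_le_mul_of_nonneg_left h1 hBpos.le
          · exact h2
          · positivity
          · positivity
      _ = B * (4 * α ^ 2) * (1/((j:ℝ)-1) - 1/j) := by ring
  have hsum := Finset.sum_le_sum key
  unfold A
  refine le_trans hsum ?_
  rw [← Finset.mul_sum, tele k hk n (le_of_lt hkn)]
  have hn0 : (0:ℝ) < n := by exact_mod_cast lt_of_le_of_lt (Nat.zero_le k) hkn
  have : (1:ℝ)/k - 1/n ≤ 1/k := by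
    have : (0:ℝ) ≤ 1/n := by positivity
    linarith
  calc B * (4 * α ^ 2) * (1/(k:ℝ) - 1/n) ≤ B * (4 * α ^ 2) * (1/(k:ℝ)) :=
        mul_le_mul_of_nonneg_left this (by positivity)
    _ = 4 * α ^ 2 * B * ((k:ℝ))⁻¹ := by rw [one_div]; ring
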